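/- For 0 < δ < 1 and ν > 1, the sum over all k in ℤⁿ of e^{−2|k|δ}·|k|^ν is strictly less than (ν/e)^ν · (1+e)ⁿ / δ^{ν+n}. -/

import Mathlib

/-!
Maximising `x ↦ x ^ ν * exp (-δ x)` gives `|k| ^ ν * exp (-|k| δ) ≤ (ν / (e δ)) ^ ν`, so each
summand is at most `(ν / (e δ)) ^ ν * exp (-|k| δ)`, strictly so at `k = 0`. The majorant factorises
over the coordinates, and its sum is the `n`-th power of the two-sided geometric series
`∑ₘ exp (-δ) ^ |m| = (1 + exp (-δ)) / (1 - exp (-δ))`, which is at most `(1 + e) / δ` for `δ < 1`.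
-/

open Real

theorem HasSum.pi_prod_of_nonneg {β : Type*} {g : β → ℝ} {T : ℝ} (hg0 : ∀ b, 0 ≤ g b)
    (hg : HasSum g T) (n : ℕ) : HasSum (fun k : Fin n → β => ∏ i, g (k i)) (T ^ n) := by
  induction n with
  | zero => simp
  | succ n ih =>
    have hsummable : Summable fun p : β × (Fin n → β) => g p.1 * ∏ i, g (p.2 i) :=
      Summable.mul_of_nonneg (f := g) (g := fun k : Fin n → β => ∏ i, g (k i))
        hg.summable ih.summable hg0 fun _ => Finset.prod_nonneg fun _ _ => hg0 _
    have hprod : HasSum (fun p : β × (Fin n → β) => g p.1 * ∏ i, g (p.2 i)) (T * T ^ n) :=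
      HasSum.mul (f := g) (g := fun k : Fin n → β => ∏ i, g (k i)) hg ih hsummable
    rw [pow_succ', ← (Fin.consEquiv fun _ => β).hasSum_iff]
    simpa [Function.comp_def, Fin.consEquiv, Fin.prod_univ_succ] using hprod

theorem hasSum_pow_natAbs {r : ℝ} (hr0 : 0 ≤ r) (hr1 : r < 1) :
    HasSum (fun m : ℤ => r ^ m.natAbs) ((1 + r) / (1 - r)) := by
  have hgeom := hasSum_geometric_of_lt_one hr0 hr1
  have hneg : HasSum (fun m : ℕ => r ^ (m + 1)) (r * (1 - r)⁻¹) := by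
    simpa only [pow_succ'] using hgeom.mul_left r
  convert HasSum.of_nat_of_neg_add_one (f := fun m : ℤ => r ^ m.natAbs) hgeom
    (hneg.congr_fun fun _ => rfl) using 1
  field_simp [(sub_pos.2 hr1).ne']

theorem prod_exp_neg_pow_natAbs {ι : Type*} [Fintype ι] (δ : ℝ) (k : ι → ℤ) :
    ∏ i, exp (-δ) ^ (k i).natAbs = exp (-δ * ((∑ i, |k i| : ℤ) : ℝ)) := by
  simp_rw [← exp_nat_mul, ← exp_sum]
  push_cast
  rw [Finset.mul_sum]
  congr 1
  refine Finset.sum_congr rfl fun i _ => ?_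
  rw [Nat.cast_natAbs, Int.cast_abs]
  ring

theorem mul_exp_neg_mul_le {a : ℝ} (ha : 0 < a) (x : ℝ) : x * exp (-(a * x)) ≤ (exp 1 * a)⁻¹ := by
  have h : a * x * exp (-(a * x)) ≤ exp (-1) :=
    calc a * x * exp (-(a * x)) ≤ exp (a * x - 1) * exp (-(a * x)) := by
          gcongr; linarith [add_one_le_exp (a * x - 1)]
      _ = exp (-1) := by rw [← exp_add]; ring_nf
  rw [mul_assoc, mul_comm, ← le_div_iff₀ ha] at h
  simpa [exp_neg, div_eq_mul_inv, mul_comm] using h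

theorem rpow_mul_exp_neg_mul_le {δ ν x : ℝ} (hδ : 0 < δ) (hν : 0 < ν) (hx : 0 ≤ x) :
    x ^ ν * exp (-(δ * x)) ≤ (ν / (exp 1 * δ)) ^ ν := by
  have hbase := mul_exp_neg_mul_le (div_pos hδ hν) x
  calc x ^ ν * exp (-(δ * x)) = (x * exp (-(δ / ν * x))) ^ ν := by
        rw [mul_rpow hx (exp_pos _).le, ← exp_mul]; congr 2; field_simp
    _ ≤ (exp 1 * (δ / ν))⁻¹ ^ ν := by gcongr
    _ = (ν / (exp 1 * δ)) ^ ν := by field_simp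

theorem exp_neg_two_mul_mul_rpow_le {δ ν x : ℝ} (hδ : 0 < δ) (hν : 0 < ν) (hx : 0 ≤ x) :
    exp (-2 * x * δ) * x ^ ν ≤ (ν / (exp 1 * δ)) ^ ν * exp (-δ * x) := by
  calc exp (-2 * x * δ) * x ^ ν = x ^ ν * exp (-(δ * x)) * exp (-δ * x) := by
        rw [mul_assoc (x ^ ν), ← exp_add, mul_comm]; ring_nf
    _ ≤ (ν / (exp 1 * δ)) ^ ν * exp (-δ * x) := by
        gcongr; exact rpow_mul_exp_neg_mul_le hδ hν hx

theorem exp_neg_two_mul_sum_abs_mul_rpow_le {ι : Type*} [Fintype ι] {δ ν : ℝ} (hδ : 0 < δ)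
    (hν : 0 < ν) (k : ι → ℤ) :
    exp (-2 * ((∑ i, |k i| : ℤ) : ℝ) * δ) * ((∑ i, |k i| : ℤ) : ℝ) ^ ν
      ≤ (ν / (exp 1 * δ)) ^ ν * ∏ i, exp (-δ) ^ (k i).natAbs := by
  rw [prod_exp_neg_pow_natAbs]
  exact exp_neg_two_mul_mul_rpow_le hδ hν (by positivity)

theorem one_add_exp_neg_div_le {δ : ℝ} (hδ0 : 0 < δ) (hδ1 : δ < 1) :
    (1 + exp (-δ)) / (1 - exp (-δ)) ≤ (1 + exp 1) / δ := by
  have hlow : δ * exp (-δ) ≤ 1 - exp (-δ) := by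
    have := mul_le_mul_of_nonneg_right (add_one_le_exp δ) (exp_pos (-δ)).le
    rw [← exp_add, add_neg_cancel, exp_zero] at this
    linarith
  have hup : 1 ≤ exp 1 * exp (-δ) := by rw [← exp_add]; exact one_le_exp (by linarith)
  calc (1 + exp (-δ)) / (1 - exp (-δ)) ≤ (1 + exp (-δ)) / (δ * exp (-δ)) := by
        gcongr
    _ ≤ (1 + exp 1) / δ := by
        rw [div_le_div_iff₀ (by positivity) hδ0]
        nlinarith

theorem exp_sum_estimate_general (n : ℕ) (δ ν : ℝ) (hδ0 : 0 < δ) (hδ1 : δ < 1)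
    (hν : 1 < ν) :
    ∑' k : Fin n → ℤ,
        Real.exp (-2 * ((∑ i, |k i| : ℤ) : ℝ) * δ) * (((∑ i, |k i| : ℤ) : ℝ)) ^ ν
      < (ν / Real.exp 1) ^ ν * (1 + Real.exp 1) ^ n / δ ^ (ν + n) := by
  have hν0 : 0 < ν := by linarith
  set C := ν / (exp 1 * δ) with hC
  have hgeom := hasSum_pow_natAbs (exp_pos (-δ)).le (exp_lt_one_iff.2 (by linarith))
  have hdom : HasSum (fun k : Fin n → ℤ => C ^ ν * ∏ i, exp (-δ) ^ (k i).natAbs)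
      (C ^ ν * ((1 + exp (-δ)) / (1 - exp (-δ))) ^ n) :=
    (hgeom.pi_prod_of_nonneg (fun _ => by positivity) n).mul_left _
  have hle := exp_neg_two_mul_sum_abs_mul_rpow_le (ι := Fin n) hδ0 hν0
  calc _ < C ^ ν * ((1 + exp (-δ)) / (1 - exp (-δ))) ^ n :=
        hdom.tsum_eq ▸ Summable.tsum_lt_tsum (i := 0) hle
          (by simpa [zero_rpow hν0.ne'] using rpow_pos_of_pos (by positivity : 0 < C) ν)
          (hdom.summable.of_nonneg_of_le (fun k => by positivity) hle) hdom.summable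
    _ ≤ C ^ ν * ((1 + exp 1) / δ) ^ n := by
        gcongr C ^ ν * ?_ ^ n
        · exact hgeom.nonneg fun _ => by positivity
        · exact one_add_exp_neg_div_le hδ0 hδ1
    _ = _ := by
        rw [hC, ← div_div, div_rpow (by positivity) hδ0.le, rpow_add hδ0, rpow_natCast, div_pow]
        field_simp

theorem exp_sum_estimate (n : ℕ) (hn : 1 ≤ n) (δ ν : ℝ) (hδ0 : 0 < δ) (hδ1 : δ < 1)
    (hν : 1 < ν) :
    ∑' k : Fin n → ℤ,
        Real.exp (-2 * ((∑ i, |k i| : ℤ) : ℝ) * δ) * (((∑ i, |k i| : ℤ) : ℝ)) ^ ν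
      < (ν / Real.exp 1) ^ ν * (1 + Real.exp 1) ^ n / δ ^ (ν + n) :=
  exp_sum_estimate_general n δ ν hδ0 hδ1 hν
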